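/- arXiv:1602.03445 — 8 statements merged into one kernel-verified Lean document; each statement's English description precedes it below -/
import Mathlib

section
/- If S and S' are finite commutative unital semigroups, then D(S × S') ≥ D(S) + D(S') − 1, where D denotes the Davenport constant. -/
/-- A list (sequence) in a commutative monoid is reducible if a proper
subsequence has the same product. -/
def Reducible {M : Type*} [CommMonoid M] (A : List M) : Prop :=
  ∃ B : List M, List.Sublist B A ∧ B.length < A.length ∧ B.prod = A.prod

/-- The Davenport constant: the least positive `n` such that every sequence of
length `n` is reducible (`⊤` if none exists). -/
noncomputable def davenport (M : Type*) [CommMonoid M] : ℕ∞ :=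
  sInf {k : ℕ∞ | ∃ n : ℕ, k = n ∧ 0 < n ∧ ∀ A : List M, A.length = n → Reducible A}

/-- An ideal of a commutative monoid. -/
def IsMulIdeal {M : Type*} [CommMonoid M] (T : Set M) : Prop :=
  ∀ s t : M, t ∈ T → s * t ∈ T

/-- The relative Davenport constant `D(S, T)`: the least positive `n` such
that every sequence of length `n` with product in `T` is reducible. -/
noncomputable def davenportRel (M : Type*) [CommMonoid M] (T : Set M) : ℕ∞ :=
  sInf {k : ℕ∞ | ∃ n : ℕ, k = n ∧ 0 < n ∧
    ∀ A : List M, A.length = n → A.prod ∈ T → Reducible A}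

/-- `(S, T)` is a unit-stabilized pair. -/
def UnitStabilizedPair (M : Type*) [CommMonoid M] (T : Set M) : Prop :=
  ∀ a b : M, a * b ∉ T →
    {u : Mˣ | (u : M) * a = a} = {u : Mˣ | (u : M) * (a * b) = a * b} →
    ∃ u : Mˣ, a * b = a * u

/-!
Embed an irreducible sequence of `S` by `s ↦ (s, 1)` and one of `S'` by `s' ↦ (1, s')` and
concatenate: a proper subsequence with the same product would be proper in one of the two
coordinates, so the result is irreducible in `S × S'`. Since `D(M)` is one more than the supremum
of the lengths of irreducible sequences of `M` (also when it is `⊤`), this gives the bound.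
-/

section Davenport

variable {M : Type*} [CommMonoid M]

theorem Reducible.cons {A : List M} (a : M) (h : Reducible A) : Reducible (a :: A) := by
  obtain ⟨B, hBA, hlen, hprod⟩ := h
  exact ⟨a :: B, hBA.cons_cons a, by simpa using hlen, by simp [hprod]⟩

theorem Reducible.append_left {A : List M} (C : List M) (h : Reducible A) :
    Reducible (C ++ A) := by
  induction C with
  | nil => exact h
  | cons a C ih => exact ih.cons a

theorem not_reducible_nil : ¬ Reducible ([] : List M) := by
  rintro ⟨B, -, hlen, -⟩
  simp at hlen

theorem length_lt_davenport {A : List M} (hA : ¬ Reducible A) :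
    (A.length : ℕ∞) < davenport M := by
  refine (ENat.add_one_le_iff (ENat.natCast_ne_top _)).mp (le_sInf ?_)
  rintro _ ⟨n, rfl, -, hall⟩
  norm_cast
  by_contra! hn
  have hsuffix : (A.drop (A.length - n)).length = n := by
    simp only [List.length_drop]
    omega
  refine hA ?_
  rw [← List.take_append_drop (A.length - n) A]
  exact (hall _ hsuffix).append_left _

theorem davenport_le_of_forall_length_lt {a : ℕ∞}
    (h : ∀ A : List M, ¬ Reducible A → (A.length : ℕ∞) < a) :
    davenport M ≤ a := by
  induction a with
  | top => exact le_top
  | coe n =>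
    refine sInf_le ⟨n, rfl, by exact_mod_cast h [] not_reducible_nil, fun A hA => ?_⟩
    by_contra hA'
    simpa [hA] using h A hA'

instance : Nonempty {A : List M // ¬ Reducible A} := ⟨⟨[], not_reducible_nil⟩⟩

theorem davenport_eq_iSup :
    davenport M = ⨆ A : {A : List M // ¬ Reducible A}, (A.1.length + 1 : ℕ∞) :=
  le_antisymm
    (davenport_le_of_forall_length_lt fun A hA =>
      (ENat.add_one_le_iff (ENat.natCast_ne_top _)).mp (le_iSup_of_le ⟨A, hA⟩ le_rfl))
    (iSup_le fun A => (ENat.add_one_le_iff (ENat.natCast_ne_top _)).mpr (length_lt_davenport A.2))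

end Davenport

theorem not_reducible_map_inl_append_map_inr {S S' : Type*} [CommMonoid S] [CommMonoid S']
    {A : List S} {A' : List S'} (hA : ¬ Reducible A) (hA' : ¬ Reducible A') :
    ¬ Reducible (A.map (MonoidHom.inl S S') ++ A'.map (MonoidHom.inr S S')) := by
  rintro ⟨B, hB, hlen, hprod⟩
  obtain ⟨_, _, rfl, hB₁, hB₂⟩ := List.sublist_append_iff.mp hB
  obtain ⟨A₁, hA₁, rfl⟩ := List.sublist_map_iff.mp hB₁
  obtain ⟨A₂, hA₂, rfl⟩ := List.sublist_map_iff.mp hB₂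
  simp only [List.prod_append, ← map_list_prod, MonoidHom.inl_apply, MonoidHom.inr_apply,
    Prod.mk_mul_mk, mul_one, one_mul, Prod.mk.injEq] at hprod
  simp only [List.length_append, List.length_map] at hlen
  rcases lt_or_ge A₁.length A.length with h | h
  · exact hA ⟨A₁, hA₁, h, hprod.1⟩
  · exact hA' ⟨A₂, hA₂, by have := hA₁.length_le; omega, hprod.2⟩

theorem davenport_prod_ge_general {S S' : Type*} [CommMonoid S] [CommMonoid S'] :
    davenport (S × S') ≥ davenport S + davenport S' - 1 := by
  rw [ge_iff_le, tsub_le_iff_right, davenport_eq_iSup (M := S), davenport_eq_iSup (M := S')]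
  refine ENat.iSup_add_iSup_le fun ⟨A, hA⟩ ⟨A', hA'⟩ => ?_
  have hlt := length_lt_davenport (not_reducible_map_inl_append_map_inr hA hA')
  simp only [List.length_append, List.length_map, Nat.cast_add] at hlt
  calc (A.length + 1 : ℕ∞) + (A'.length + 1) = A.length + A'.length + 1 + 1 := by ring
    _ ≤ davenport (S × S') + 1 := by gcongr; exact (ENat.add_one_le_iff (by simp)).mpr hlt

theorem davenport_prod_ge {S S' : Type*} [CommMonoid S] [CommMonoid S']
    [Finite S] [Finite S'] :
    davenport (S × S') ≥ davenport S + davenport S' - 1 :=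
  davenport_prod_ge_general
end

section
/- If R is a commutative unital ring and I ⊆ R is an ideal, then D(R) ≥ D(R/I), where D denotes the Davenport constant of the multiplicative semigroup of the ring. -/
theorem davenport_quotient_le {R : Type*} [CommRing R] (I : Ideal R) :
    davenport (R ⧸ I) ≤ davenport R := by
  apply sInf_le_sInf
  rintro k ⟨n, rfl, hn, hall⟩
  refine ⟨n, rfl, hn, fun A hA => ?_⟩
  set f := Ideal.Quotient.mk I
  have hsurj := Ideal.Quotient.mk_surjective (I := I)
  set A' : List R := A.map (fun a => (hsurj a).choose) with hA'
  have hmap : A'.map f = A := by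
    rw [hA', List.map_map]
    conv_rhs => rw [← List.map_id A]
    exact List.map_congr_left (fun a _ => (hsurj a).choose_spec)
  obtain ⟨B', hsub, hlen, hprod⟩ := hall A' (by simp [hA', hA])
  refine ⟨B'.map f, ?_, ?_, ?_⟩
  · rw [← hmap]; exact hsub.map f
  · simpa [hA', hA] using hlen
  · rw [← hmap, ← map_list_prod f, ← map_list_prod f, hprod]
end

section
/- Let R be a commutative unital ring whose multiplicative monoid has finite Davenport constant D(R) = k < ∞. Then R has at most k − 1 maximal ideals. -/
/-- If the Davenport constant equals `k`, then `k` is positive and every list of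
length `k` is reducible. -/
lemma davenport_spec {M : Type*} [CommMonoid M] (k : ℕ) (h : davenport M = (k : ℕ∞)) :
    0 < k ∧ ∀ A : List M, A.length = k → Reducible A := by
  classical
  set S : Set ℕ∞ :=
    {k : ℕ∞ | ∃ n : ℕ, k = n ∧ 0 < n ∧ ∀ A : List M, A.length = n → Reducible A} with hS
  have hne : S.Nonempty := by
    by_contra hemp
    rw [Set.not_nonempty_iff_eq_empty] at hemp
    have : davenport M = ⊤ := by
      rw [davenport, ← hS, hemp, sInf_empty]
    rw [h] at this
    exact (ENat.coe_ne_top k) this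
  obtain ⟨x, n0, rfl, hn0pos, hn0⟩ := hne
  set T : Set ℕ := {n : ℕ | 0 < n ∧ ∀ A : List M, A.length = n → Reducible A} with hT
  have hTne : T.Nonempty := ⟨n0, hn0pos, hn0⟩
  have hm : sInf T ∈ T := Nat.sInf_mem hTne
  have hdav : davenport M = ((sInf T : ℕ) : ℕ∞) := by
    apply le_antisymm
    · exact sInf_le ⟨sInf T, rfl, hm.1, hm.2⟩
    · apply le_sInf
      rintro b ⟨n, rfl, hpos, hall⟩
      have hmem : n ∈ T := ⟨hpos, hall⟩
      exact_mod_cast Nat.sInf_le hmem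
  rw [h] at hdav
  have : k = sInf T := by exact_mod_cast hdav
  rw [this]
  exact ⟨hm.1, hm.2⟩

/-- There is no injective family of `k` maximal ideals if every list of length
`k` is reducible. -/
lemma no_inj_maximal {R : Type*} [CommRing R] (k : ℕ)
    (hall : ∀ A : List R, A.length = k → Reducible A)
    (f : Fin k → Ideal R) (hmax : ∀ i, (f i).IsMaximal)
    (hinj : Function.Injective f) : False := by
  classical
  -- choose CRT witnesses
  have hco : ∀ i j : Fin k, ∃ y : R, i ≠ j → y ∈ f j ∧ 1 - y ∈ f i := by
    intro i j
    by_cases hij : i = j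
    · exact ⟨0, fun h => absurd hij h⟩
    · have hsup : f i ⊔ f j = ⊤ :=
        (hmax i).coprime_of_ne (hmax j) (fun he => hij (hinj he))
      have hcop : IsCoprime (f i) (f j) := Ideal.isCoprime_iff_sup_eq.mpr hsup
      obtain ⟨x, hx, y, hy, hxy⟩ := Ideal.isCoprime_iff_exists.mp hcop
      refine ⟨y, fun _ => ⟨hy, ?_⟩⟩
      have : 1 - y = x := by rw [← hxy]; ring
      rw [this]; exact hx
  choose y hy using hco
  set a : Fin k → R := fun i => 1 - ∏ j ∈ Finset.univ.erase i, y i j with ha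
  -- a i maps to 0 in R ⧸ f i
  have mk_self : ∀ i, Ideal.Quotient.mk (f i) (a i) = 0 := by
    intro i
    have hprod : Ideal.Quotient.mk (f i) (∏ j ∈ Finset.univ.erase i, y i j) = 1 := by
      rw [map_prod]
      apply Finset.prod_eq_one
      intro j hj
      have hji : j ≠ i := Finset.ne_of_mem_erase hj
      have := (hy i j hji.symm).2
      have : Ideal.Quotient.mk (f i) (y i j) = Ideal.Quotient.mk (f i) 1 := by
        rw [Ideal.Quotient.eq]
        have h1 : y i j - 1 = -(1 - y i j) := by ring
        rw [h1]
        exact (f i).neg_mem this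
      simpa using this
    simp [ha, map_sub, hprod]
  -- a i maps to 1 in R ⧸ f j for j ≠ i
  have mk_other : ∀ i j : Fin k, j ≠ i → Ideal.Quotient.mk (f j) (a i) = 1 := by
    intro i j hji
    have hprod : Ideal.Quotient.mk (f j) (∏ l ∈ Finset.univ.erase i, y i l) = 0 := by
      rw [map_prod]
      apply Finset.prod_eq_zero (Finset.mem_erase.mpr ⟨hji, Finset.mem_univ j⟩)
      rw [Ideal.Quotient.eq_zero_iff_mem]
      exact (hy i j hji.symm).1
    simp [ha, map_sub, hprod]
  -- the list
  set A : List R := (List.finRange k).map a with hA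
  have hAlen : A.length = k := by simp [hA]
  obtain ⟨B, hsub, hlen, hprodeq⟩ := hall A hAlen
  obtain ⟨l, hlsub, rfl⟩ := List.sublist_map_iff.mp hsub
  have hlnodup : l.Nodup := (List.nodup_finRange k).sublist hlsub
  have hllen : l.length < k := by
    have := hlen
    simpa [hA, hAlen] using this
  -- find a missing index
  have hmiss : ∃ i : Fin k, i ∉ l := by
    by_contra hc
    push_neg at hc
    have huniv : l.toFinset = Finset.univ := Finset.eq_univ_iff_forall.mpr
      (fun x => List.mem_toFinset.mpr (hc x))
    have : l.toFinset.card = k := by rw [huniv]; simp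
    rw [List.toFinset_card_of_nodup hlnodup] at this
    omega
  obtain ⟨i, hi⟩ := hmiss
  have hne : f i ≠ ⊤ := (hmax i).ne_top
  have : Nontrivial (R ⧸ f i) := Ideal.Quotient.nontrivial_iff.mpr hne
  set φ := Ideal.Quotient.mk (f i) with hφ
  have hBprod : φ (List.map a l).prod = 1 := by
    rw [map_list_prod]
    apply List.prod_eq_one
    intro x hx
    rw [List.map_map] at hx
    obtain ⟨j, hj, rfl⟩ := List.mem_map.mp hx
    have hij : i ≠ j := by rintro rfl; exact hi hj
    exact mk_other j i hij
  have hAprod : φ A.prod = 0 := by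
    have : A.prod = ∏ j, a j := (Fin.prod_univ_def a).symm
    rw [this, map_prod]
    exact Finset.prod_eq_zero (Finset.mem_univ i) (mk_self i)
  rw [hprodeq, hAprod] at hBprod
  exact zero_ne_one hBprod

theorem maximal_ideals_le {R : Type*} [CommRing R] (k : ℕ)
    (h : davenport R = (k : ℕ∞)) :
    {I : Ideal R | I.IsMaximal}.Finite ∧ {I : Ideal R | I.IsMaximal}.ncard ≤ k - 1 := by
  classical
  obtain ⟨hkpos, hall⟩ := davenport_spec k h
  set s : Set (Ideal R) := {I : Ideal R | I.IsMaximal} with hs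
  -- any Finset of k maximal ideals gives a contradiction
  have hno : ∀ t : Finset (Ideal R), ↑t ⊆ s → t.card = k → False := by
    intro t hts hcard
    have e := t.equivFinOfCardEq hcard
    refine no_inj_maximal k hall (fun i => (e.symm i : Ideal R)) ?_ ?_
    · intro i
      exact hts (e.symm i).2
    · intro i j hij
      have : e.symm i = e.symm j := Subtype.ext hij
      exact e.symm.injective this
  have hfin : s.Finite := by
    by_contra hinf
    rw [← Set.not_infinite, not_not] at hinf
    obtain ⟨t, hts, hcard⟩ := (Set.Infinite.exists_subset_card_eq hinf k)
    exact hno t hts hcard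
  refine ⟨hfin, ?_⟩
  by_contra hcard
  push_neg at hcard
  have hk : k ≤ s.ncard := by omega
  obtain ⟨u, hus, hucard⟩ := Set.exists_subset_card_eq hk
  have hufin : u.Finite := hfin.subset hus
  have : hufin.toFinset.card = k := by
    rw [← hucard, Set.ncard_eq_toFinset_card u hufin]
  exact hno hufin.toFinset (by simpa using hus) this
end

section
/- If R is a commutative unital ring with D(R) < ∞ (Davenport constant of the multiplicative monoid), then R is finite. -/
/-! Finiteness of `D(R)` bounds the length of irreducible sequences, which rules out three kinds of
infinitude. An infinite abelian group has irreducible sequences of every length, so `Rˣ` is finite.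
By the Chinese remainder theorem, `n` distinct maximal ideals give a surjection of `R` onto a
product of `n` fields, in which the `n` sequence elements `(1, …, 1, 0, 1, …, 1)` are irreducible;
so `R` has finitely many maximal ideals. Each residue field `R/m` inherits the bound, so it is
finite, since its nonzero elements are units. Finally the kernel of `R → ∏ R/m` is the Jacobson
radical `J`, and `1 + J ⊆ Rˣ` makes it finite as well. -/

open Function

section Reducible

variable {M N : Type*} [CommMonoid M] [CommMonoid N]

lemma Reducible.map (f : M →* N) {A : List M} (h : Reducible A) : Reducible (A.map f) := by
  obtain ⟨B, hBA, hlen, hprod⟩ := h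
  exact ⟨B.map f, hBA.map f, by simpa using hlen, by rw [← map_list_prod, hprod, map_list_prod]⟩

lemma Reducible.of_map {f : M →* N} (hf : Injective f) {A : List M}
    (h : Reducible (A.map f)) : Reducible A := by
  obtain ⟨_, hBA, hlen, hprod⟩ := h
  obtain ⟨B, hB, rfl⟩ := List.sublist_map_iff.mp hBA
  refine ⟨B, hB, by simpa using hlen, hf ?_⟩
  rwa [map_list_prod, map_list_prod]

lemma Reducible.of_cons {G : Type*} [CommGroup G] {g : G} {L : List G} (h : Reducible (g :: L)) :
    Reducible L ∨ ∃ B : List G, B.Sublist L ∧ g = B.prod / L.prod := by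
  obtain ⟨B, hB, hlen, hprod⟩ := h
  rcases List.sublist_cons_iff.mp hB with hBL | ⟨B, rfl, hBL⟩
  · exact Or.inr ⟨B, hBL, by rw [hprod, List.prod_cons, mul_div_cancel_right]⟩
  · exact Or.inl ⟨B, hBL, by simpa using hlen, by simpa using hprod⟩

lemma exists_length_eq_not_reducible (G : Type*) [CommGroup G] [Infinite G] (n : ℕ) :
    ∃ L : List G, L.length = n ∧ ¬ Reducible L := by
  classical
  induction n with
  | zero => exact ⟨[], rfl, fun ⟨B, _, hlen, _⟩ => Nat.not_lt_zero _ hlen⟩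
  | succ n ih =>
    obtain ⟨L, hlen, hL⟩ := ih
    -- any `g` outside the finite set of quotients `B.prod / L.prod` keeps `g :: L` irreducible
    obtain ⟨g, hg⟩ :=
      Infinite.exists_notMem_finset (L.sublists.map fun B => B.prod / L.prod).toFinset
    refine ⟨g :: L, by simp [hlen], fun (h : Reducible (g :: L)) => ?_⟩
    rcases h.of_cons with hred | ⟨B, hB, rfl⟩
    · exact hL hred
    · exact hg (by simpa using ⟨B, hB, rfl⟩)

end Reducible

lemma Pi.not_reducible_ofFn_update_one_zero {n : ℕ} {M : Fin n → Type*}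
    [∀ i, CommMonoidWithZero (M i)] [∀ i, Nontrivial (M i)] :
    ¬ Reducible (List.ofFn fun i => update (1 : ∀ i, M i) i 0) := by
  classical
  set e : Fin n → ∀ i, M i := fun i => update 1 i 0
  rintro ⟨_, hB, hlen, hprod⟩
  obtain ⟨l, -, rfl⟩ := List.sublist_map_iff.mp (List.ofFn_eq_map ▸ hB)
  obtain ⟨j, hj⟩ : ∃ j, j ∉ l := by
    by_contra! hall
    have : n ≤ l.length := calc
      n = (Finset.univ : Finset (Fin n)).card := (Finset.card_fin n).symm
      _ ≤ l.toFinset.card := Finset.card_le_card fun j _ => List.mem_toFinset.mpr (hall j)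
      _ ≤ l.length := l.toFinset_card_le
    simp only [List.length_map, List.length_ofFn] at hlen
    omega
  have hone : (l.map e).prod j = 1 := by
    rw [Pi.list_prod_apply, List.map_map]
    refine List.prod_eq_one fun _ hx => ?_
    obtain ⟨i, hi, rfl⟩ := List.mem_map.mp hx
    exact update_of_ne (by rintro rfl; exact hj hi) _ _
  have hzero : (List.ofFn e).prod j = 0 := by
    rw [List.prod_ofFn, Finset.prod_apply]
    exact Finset.prod_eq_zero (Finset.mem_univ j) (update_self _ _ _)
  exact zero_ne_one (hzero.symm.trans (hprod ▸ hone))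

-- Equivalent to `davenport M ≤ n`.
def IsDavenportBound (M : Type*) [CommMonoid M] (n : ℕ) : Prop :=
  ∀ A : List M, A.length = n → Reducible A

lemma exists_isDavenportBound_of_davenport_ne_top {M : Type*} [CommMonoid M]
    (h : davenport M ≠ ⊤) : ∃ n, IsDavenportBound M n := by
  by_contra! hno
  refine h (sInf_eq_top.mpr ?_)
  rintro _ ⟨n, rfl, -, hn⟩
  exact absurd hn (hno n)

namespace IsDavenportBound

variable {M N : Type*} [CommMonoid M] [CommMonoid N] {n : ℕ}

lemma of_surjective (f : M →* N) (hf : Surjective f) (h : IsDavenportBound M n) :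
    IsDavenportBound N n := by
  intro A hA
  obtain ⟨A, rfl⟩ := (List.map_surjective_iff.mpr hf) A
  exact (h A (by simpa using hA)).map f

lemma finite_units (h : IsDavenportBound M n) : Finite Mˣ := by
  by_contra hinf
  have : Infinite Mˣ := not_finite_iff_infinite.mp hinf
  obtain ⟨L, hlen, hL⟩ := exists_length_eq_not_reducible Mˣ n
  exact hL ((h _ (by simpa using hlen)).of_map (f := Units.coeHom M) Units.val_injective)

lemma finite {G₀ : Type*} [CommGroupWithZero G₀] (h : IsDavenportBound G₀ n) :
    Finite G₀ := by
  classical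
  have := h.finite_units
  have : Finite {a : G₀ // a ≠ 0} := .of_equiv _ unitsEquivNeZero
  exact .of_equiv _ (Equiv.sumCompl (· = (0 : G₀)))

lemma finite_maximalSpectrum {R : Type*} [CommRing R]
    (h : IsDavenportBound R n) : Finite (MaximalSpectrum R) := by
  by_contra hinf
  have := not_finite_iff_infinite.mp hinf
  let e : Fin n ↪ MaximalSpectrum R := Fin.valEmbedding.trans (Infinite.natEmbedding _)
  have hcop : Pairwise (IsCoprime on fun i => (e i).asIdeal) := fun i j hij =>
    Ideal.isCoprime_iff_sup_eq.mpr ((e i).isMaximal.coprime_of_ne (e j).isMaximal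
      fun hij' => hij (e.injective (MaximalSpectrum.ext hij')))
  let φ : R →+* ∀ i, R ⧸ (e i).asIdeal := RingHom.pi fun i => Ideal.Quotient.mk _
  have hφ : Surjective φ := fun x =>
    let ⟨r, hr⟩ := Ideal.pi_quotient_surjective hcop x
    ⟨r, funext hr⟩
  exact Pi.not_reducible_ofFn_update_one_zero
    (h.of_surjective φ.toMonoidHom hφ _ List.length_ofFn)

end IsDavenportBound

lemma isUnit_one_add_of_mem_iInf_maximalSpectrum {R : Type*} [CommRing R] {x : R}
    (hx : x ∈ ⨅ m : MaximalSpectrum R, m.asIdeal) : IsUnit (1 + x) := by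
  by_contra hu
  obtain ⟨I, hI, hxI⟩ := exists_max_ideal_of_mem_nonunits hu
  have : x ∈ I := Submodule.mem_iInf _ |>.mp hx ⟨I, hI⟩
  exact hI.ne_top (I.eq_top_iff_one.mpr (by simpa using I.sub_mem hxI this))

lemma finite_of_finite_units_of_finite_residueFields {R : Type*} [CommRing R] [Finite Rˣ]
    [Finite (MaximalSpectrum R)] [∀ m : MaximalSpectrum R, Finite (R ⧸ m.asIdeal)] :
    Finite R := by
  set J := ⨅ m : MaximalSpectrum R, m.asIdeal
  have : Finite J :=
    .of_injective (fun x : J => (isUnit_one_add_of_mem_iInf_maximalSpectrum x.2).unit)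
      fun x y hxy => Subtype.ext (add_left_cancel (congrArg Units.val hxy))
  have : Finite (R ⧸ J) := .of_injective _ (Ideal.quotientInfToPiQuotient_inj _)
  have : Finite (R ⧸ J.toAddSubgroup) := ‹Finite (R ⧸ J)›
  exact Finite.of_addSubgroup_quotient J.toAddSubgroup

theorem finite_of_davenport_lt_top {R : Type*} [CommRing R]
    (h : davenport R ≠ ⊤) : Finite R := by
  obtain ⟨n, hn⟩ := exists_isDavenportBound_of_davenport_ne_top h
  have := hn.finite_units
  have := hn.finite_maximalSpectrum
  have (m : MaximalSpectrum R) : Finite (R ⧸ m.asIdeal) :=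
    letI := Ideal.Quotient.field m.asIdeal
    (hn.of_surjective (Ideal.Quotient.mk m.asIdeal).toMonoidHom
      Ideal.Quotient.mk_surjective).finite
  exact finite_of_finite_units_of_finite_residueFields
end

section
/- Let S be a commutative unital semigroup and T ⊆ S an ideal (S·T ⊆ T). Suppose s ∈ S and A is a sequence in S of length exactly D(S,T) such that s·π(A) ∈ T, where π(A) is the product of A. Then there exists a proper subsequence A' ⊊ A with s·π(A') = s·π(A). -/
/-!
Let `n = D(S, T)` and write `A = a :: l`. The sequence `s * a :: l` has length `n` and product
`s * π(A) ∈ T`, so it is reducible. If the shorter subsequence keeps `s * a`, then putting `a`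
back gives the required `A'`. If it drops `s * a`, it is a subsequence of `l` with product
`s * π(A) ∈ T`, so `π(A) ∈ T` because `T` is an ideal; then `A` itself is reducible, and any
shorter subsequence with the same product will do.
-/

theorem IsMulIdeal.prod_mem_of_sublist {M : Type*} [CommMonoid M] {T : Set M} (hT : IsMulIdeal T)
    {B A : List M} (hBA : B.Sublist A) (hB : B.prod ∈ T) : A.prod ∈ T := by
  obtain ⟨c, hc⟩ := hBA.prod_dvd_prod
  rw [hc, mul_comm]
  exact hT c _ hB

theorem reducible_of_davenportRel_eq {M : Type*} [CommMonoid M] {T : Set M} {n : ℕ}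
    (hn : davenportRel M T = n) :
    0 < n ∧ ∀ A : List M, A.length = n → A.prod ∈ T → Reducible A := by
  have hne : {k : ℕ∞ | ∃ m : ℕ, k = m ∧ 0 < m ∧
      ∀ A : List M, A.length = m → A.prod ∈ T → Reducible A}.Nonempty := by
    by_contra h
    rw [davenportRel, Set.not_nonempty_iff_eq_empty.mp h, sInf_empty] at hn
    exact ENat.top_ne_natCast n hn
  obtain ⟨m, hm, hpos, hred⟩ := csInf_mem hne
  obtain rfl : m = n := by exact_mod_cast hm.symm.trans hn
  exact ⟨hpos, hred⟩

theorem Reducible.cons_mul {M : Type*} [CommMonoid M] {s a : M} {l : List M}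
    (h : Reducible (s * a :: l)) :
    (∃ C : List M, C.Sublist l ∧ C.prod = s * (a :: l).prod) ∨
      ∃ C : List M, C.Sublist l ∧ C.length < l.length ∧ s * (a :: C).prod = s * (a :: l).prod := by
  obtain ⟨B, hB, hlen, hprod⟩ := h
  simp only [List.prod_cons, ← mul_assoc] at hprod ⊢
  cases hB with
  | cons _ hC => exact .inl ⟨B, hC, hprod⟩
  | cons_cons _ hC =>
    simp only [List.length_cons, List.prod_cons] at hlen hprod
    exact .inr ⟨_, hC, by omega, by rw [hprod]⟩

theorem rel_lemma {S : Type*} [CommMonoid S] (T : Set S) (hT : IsMulIdeal T)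
    (s : S) (A : List S) (hlen : (A.length : ℕ∞) = davenportRel S T)
    (hmem : s * A.prod ∈ T) :
    ∃ A' : List S, List.Sublist A' A ∧ A'.length < A.length ∧ s * A'.prod = s * A.prod := by
  obtain ⟨hpos, hred⟩ := reducible_of_davenportRel_eq hlen.symm
  obtain ⟨a, l, rfl⟩ := List.exists_cons_of_length_pos hpos
  have hprod : (s * a :: l).prod = s * (a :: l).prod := by simp only [List.prod_cons, mul_assoc]
  rcases (hred (s * a :: l) rfl (hprod ▸ hmem)).cons_mul with
    ⟨C, hC, hCprod⟩ | ⟨C, hC, hClen, hCprod⟩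
  · obtain ⟨B, hB, hBlen, hBprod⟩ :=
      hred (a :: l) rfl (hT.prod_mem_of_sublist (hC.cons a) (hCprod ▸ hmem))
    exact ⟨B, hB, hBlen, by rw [hBprod]⟩
  · exact ⟨a :: C, hC.cons_cons a, by simpa using hClen, hCprod⟩
end

section
/- Let R be a finite commutative local ring whose residue field is not isomorphic to F_2. Then the multiplicative monoid of R is unit-stabilized: for all a, b ∈ R with Stab_{U(R)}(a) = Stab_{U(R)}(ab), there exists a unit u with ab = au. -/
theorem unit_stabilized_of_residue_ne_F2 {R : Type*} [CommRing R] [IsLocalRing R]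
    [Finite R] (h : ¬ Nonempty (IsLocalRing.ResidueField R ≃+* ZMod 2)) :
    ∀ a b : R,
      {u : Rˣ | (u : R) * a = a} = {u : Rˣ | (u : R) * (a * b) = a * b} →
      ∃ u : Rˣ, a * b = a * u := by
  intro a b hst
  rcases eq_or_ne a 0 with rfl | ha
  · exact ⟨1, by simp⟩
  -- residue field has an element y with y ≠ 0 and y ≠ 1
  set k := IsLocalRing.ResidueField R
  haveI : Finite k := Finite.of_surjective _ (IsLocalRing.residue_surjective (R := R))
  haveI : Fintype k := Fintype.ofFinite k
  haveI : DecidableEq k := Classical.decEq k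
  have hcard : ∃ y : k, y ≠ 0 ∧ y ≠ 1 := by
    by_contra hc
    push_neg at hc
    have h2 : Fintype.card k = 2 := by
      have hle : Fintype.card k ≤ 2 := by
        have : (Finset.univ : Finset k) ⊆ {0, 1} := by
          intro y _
          rcases eq_or_ne y 0 with rfl | hy
          · simp
          · simp [hc y hy]
        calc Fintype.card k = (Finset.univ : Finset k).card := rfl
          _ ≤ ({0,1} : Finset k).card := Finset.card_le_card this
          _ ≤ 2 := Finset.card_insert_le _ _ |>.trans (by simp)
      have hge : 2 ≤ Fintype.card k := Fintype.one_lt_card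
      omega
    exact h ⟨(ZMod.ringEquivOfPrime k Nat.prime_two h2).symm⟩
  obtain ⟨y, hy0, hy1⟩ := hcard
  obtain ⟨w, hw⟩ := IsLocalRing.residue_surjective (R := R) y
  have hwunit : IsUnit w := by
    by_contra hwu
    exact hy0 (by rw [← hw]; exact (IsLocalRing.residue_eq_zero_iff w).mpr hwu)
  have hw1 : IsUnit (w - 1) := by
    by_contra hwu
    have : IsLocalRing.residue R (w - 1) = 0 := (IsLocalRing.residue_eq_zero_iff _).mpr hwu
    rw [map_sub, hw, map_one, sub_eq_zero] at this
    exact hy1 this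
  rcases eq_or_ne (a * b) 0 with hab | hab
  · -- every unit stabilizes a*b = 0, so w stabilizes a, contradiction
    obtain ⟨u, hu⟩ := hwunit
    have hmem : u ∈ {u : Rˣ | (u : R) * (a * b) = a * b} := by simp [hab]
    rw [← hst] at hmem
    have : (w - 1) * a = 0 := by
      have := hmem
      simp only [Set.mem_setOf_eq, hu] at this
      rw [sub_mul, one_mul, this, sub_self]
    exact absurd (hw1.mul_right_eq_zero.mp this) ha
  · -- Ann a = Ann (a*b)
    have hann : ∀ x : R, x * a = 0 → x * (a * b) = 0 := by
      intro x hx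
      have hxn : x ∈ nonunits R := by
        intro hxu
        obtain ⟨v, hv⟩ := hxu
        apply ha
        have : (v⁻¹ : Rˣ) * (x * a) = (v⁻¹ : Rˣ) * 0 := by rw [hx]
        rwa [← mul_assoc, ← hv, Units.inv_mul, one_mul, mul_zero] at this
      have hux : IsUnit (1 + x) := by
        have := IsLocalRing.isUnit_one_sub_self_of_mem_nonunits (-x) (by simpa using hxn)
        simpa using this
      obtain ⟨u, hu⟩ := hux
      have hmem : u ∈ {u : Rˣ | (u : R) * a = a} := by
        simp only [Set.mem_setOf_eq, hu, add_mul, one_mul, hx, add_zero]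
      rw [hst] at hmem
      simp only [Set.mem_setOf_eq, hu, add_mul, one_mul, add_eq_left] at hmem
      exact hmem
    have hann' : ∀ x : R, x * (a * b) = 0 → x * a = 0 := by
      intro x hx
      have hxn : x ∈ nonunits R := by
        intro hxu
        obtain ⟨v, hv⟩ := hxu
        apply hab
        have : (v⁻¹ : Rˣ) * (x * (a * b)) = (v⁻¹ : Rˣ) * 0 := by rw [hx]
        rwa [← mul_assoc, ← hv, Units.inv_mul, one_mul, mul_zero] at this
      have hux : IsUnit (1 + x) := by
        have := IsLocalRing.isUnit_one_sub_self_of_mem_nonunits (-x) (by simpa using hxn)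
        simpa using this
      obtain ⟨u, hu⟩ := hux
      have hmem : u ∈ {u : Rˣ | (u : R) * (a * b) = a * b} := by
        simp only [Set.mem_setOf_eq, hu, add_mul, one_mul, hx, add_zero]
      rw [← hst] at hmem
      simp only [Set.mem_setOf_eq, hu, add_mul, one_mul, add_eq_left] at hmem
      exact hmem
    -- pigeonhole on the set a*R
    set S : Set R := Set.range (fun r => a * r) with hS
    haveI : Finite S := Subtype.finite
    have hmemS : ∀ x : S, (x : R) * b ∈ S := by
      rintro ⟨x, r, rfl⟩
      exact ⟨r * b, by ring⟩
    set φ : S → S := fun x => ⟨(x : R) * b, hmemS x⟩ with hφ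
    have hinj : Function.Injective φ := by
      rintro ⟨x, r, hr⟩ ⟨z, s, hs⟩ hxz
      have hxz' : x * b = z * b := congrArg Subtype.val hxz
      apply Subtype.ext
      simp only at hr hs
      have h0 : (r - s) * (a * b) = 0 := by linear_combination b * hr - b * hs + hxz'
      have h1 : (r - s) * a = 0 := hann' _ h0
      show x = z
      rw [← hr, ← hs]
      linear_combination h1
    have hsurj : Function.Surjective φ := Finite.injective_iff_surjective.mp hinj
    obtain ⟨⟨x, c, hc⟩, hxa⟩ := hsurj ⟨a, ⟨1, mul_one a⟩⟩
    have hacb : a * c * b = a := by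
      have := congrArg Subtype.val hxa
      simp only [hφ] at this
      simp only at hc
      rw [hc]
      exact this
    have hcb : IsUnit (c * b) := by
      have h0 : (c * b - 1) * a = 0 := by rw [sub_mul, one_mul, sub_eq_zero, mul_comm, ← mul_assoc, hacb]
      have hn : (1 - c * b) ∈ nonunits R := by
        intro hu
        apply ha
        have h0' : (1 - c * b) * a = 0 := by rw [← neg_sub (c*b) 1, neg_mul, h0, neg_zero]
        exact hu.mul_right_eq_zero.mp h0'
      simpa using IsLocalRing.isUnit_one_sub_self_of_mem_nonunits _ hn
    have hb : IsUnit b := isUnit_of_mul_isUnit_right hcb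
    exact ⟨hb.unit, by rw [IsUnit.unit_spec]⟩
end

section
/- Let R be a finite commutative local ring with residue field F_2 and |R| = 2^n. Then the relative Davenport constant D(R, {0}) of the multiplicative monoid of R satisfies D(R, {0}) ≤ n + 1. -/
lemma AddSubgroup.two_mul_index_le_of_lt {G : Type*} [AddGroup G] {H K : AddSubgroup G}
    [H.FiniteIndex] (h : H < K) : 2 * K.index ≤ H.index := by
  have hne_one : H.relIndex K ≠ 1 := fun h1 => h.not_ge (AddSubgroup.relIndex_eq_one.mp h1)
  have hne_zero : H.relIndex K ≠ 0 :=
    (AddSubgroup.isFiniteRelIndex_of_finiteIndex (H := H) (K := K)).relIndex_ne_zero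
  rw [← AddSubgroup.relIndex_mul_index h.le]
  exact Nat.mul_le_mul_right _ (by omega)

namespace IsLocalRing

variable {R : Type*} [CommRing R] [IsLocalRing R]

theorem span_singleton_mul_lt {a b : R} (hb : ¬IsUnit b) (hab : a * b ≠ 0) :
    Ideal.span {a * b} < Ideal.span {a} := by
  refine lt_of_le_not_ge (Ideal.span_singleton_le_span_singleton.mpr (dvd_mul_right a b)) ?_
  intro hle
  obtain ⟨r, hr⟩ := Ideal.span_singleton_le_span_singleton.mp hle
  have hu : IsUnit (1 - b * r) :=
    isUnit_one_sub_self_of_mem_nonunits _ fun hbr => hb (isUnit_of_mul_isUnit_left hbr)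
  have ha : a = 0 := (hu.mul_left_eq_zero).mp (by linear_combination hr)
  exact hab (by rw [ha, zero_mul])

variable [Finite R]

theorem two_pow_length_le_index_span_prod (A : List R) (hA : ∀ a ∈ A, ¬IsUnit a)
    (hprod : A.prod ≠ 0) : 2 ^ A.length ≤ (Ideal.span {A.prod}).toAddSubgroup.index := by
  induction A with
  | nil => simp
  | cons a A ih =>
    rw [List.prod_cons, mul_comm] at hprod ⊢
    have hlt := span_singleton_mul_lt (hA a List.mem_cons_self) hprod
    calc 2 ^ (a :: A).length = 2 * 2 ^ A.length := by rw [List.length_cons, pow_succ']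
      _ ≤ 2 * (Ideal.span {A.prod}).toAddSubgroup.index := by
        gcongr
        exact ih (fun b hb => hA b (List.mem_cons_of_mem a hb)) (left_ne_zero_of_mul hprod)
      _ ≤ _ := AddSubgroup.two_mul_index_le_of_lt (Submodule.toAddSubgroup_strictMono hlt)

theorem two_pow_length_succ_le_card (A : List R) (hA : ∀ a ∈ A, ¬IsUnit a)
    (hprod : A.prod ≠ 0) : 2 ^ (A.length + 1) ≤ Nat.card R := by
  have hbot : (⊥ : Ideal R) < Ideal.span {A.prod} := by
    rwa [bot_lt_iff_ne_bot, Ne, Ideal.span_singleton_eq_bot]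
  calc 2 ^ (A.length + 1) = 2 * 2 ^ A.length := pow_succ' 2 _
    _ ≤ 2 * (Ideal.span {A.prod}).toAddSubgroup.index := by
        gcongr
        exact two_pow_length_le_index_span_prod A hA hprod
    _ ≤ (⊥ : Ideal R).toAddSubgroup.index :=
        AddSubgroup.two_mul_index_le_of_lt (Submodule.toAddSubgroup_strictMono hbot)
    _ = Nat.card R := by rw [Submodule.bot_toAddSubgroup, AddSubgroup.index_bot]

end IsLocalRing

theorem reducible_of_isUnit_mem {M : Type*} [CommMonoidWithZero M] [DecidableEq M] {A : List M}
    (hprod : A.prod = 0) {a : M} (ha : a ∈ A) (hu : IsUnit a) : Reducible A := by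
  refine ⟨A.erase a, List.erase_sublist, ?_, ?_⟩
  · rw [List.length_erase_of_mem ha]
    exact Nat.sub_one_lt (List.length_pos_of_mem ha).ne'
  · rw [hprod, ← hu.mul_right_eq_zero, List.prod_erase ha, hprod]

theorem davenportRel_le {M : Type*} [CommMonoid M] {T : Set M} {k : ℕ} (hk : 0 < k)
    (h : ∀ A : List M, A.length = k → A.prod ∈ T → Reducible A) : davenportRel M T ≤ k :=
  sInf_le ⟨k, rfl, hk, h⟩

theorem rel_davenport_zero_le_general {R : Type*} [CommRing R] [IsLocalRing R] [Finite R]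
    (n : ℕ) (hcard : Nat.card R = 2 ^ n) :
    davenportRel R {0} ≤ (n : ℕ∞) + 1 := by
  classical
  refine davenportRel_le n.succ_pos fun A hlen hprod => ?_
  rw [Set.mem_singleton_iff] at hprod
  by_contra hirr
  have hunits : ∀ a ∈ A, ¬IsUnit a := fun a ha hu => hirr (reducible_of_isUnit_mem hprod ha hu)
  have htail : A.tail.prod ≠ 0 := fun h =>
    hirr ⟨A.tail, List.tail_sublist A, by simp [hlen], by rw [h, hprod]⟩
  have hbound := IsLocalRing.two_pow_length_succ_le_card A.tail
    (fun a ha => hunits a (List.mem_of_mem_tail ha)) htail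
  rw [List.length_tail, hlen, Nat.add_sub_cancel, hcard] at hbound
  exact (Nat.pow_lt_pow_succ one_lt_two).not_ge hbound

theorem rel_davenport_zero_le {R : Type*} [CommRing R] [IsLocalRing R] [Finite R]
    (n : ℕ) (hcard : Nat.card R = 2 ^ n)
    (hres : Nonempty (IsLocalRing.ResidueField R ≃+* ZMod 2)) :
    davenportRel R {0} ≤ (n : ℕ∞) + 1 :=
  rel_davenport_zero_le_general n hcard
end

section
/- Let R be a finite commutative local ring with maximal ideal m, |R| = 2^n with n ≥ 3, m^{n−1} ≠ 0, and U(R) ≅ C_2^{n−1}. Then m = (2) and R ≅ Z/2^n Z. -/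
/-!
Units of `R` have exponent 2 and are the complement of `m`, so `|m| = 2^{n-1}`: the ideal `m`
has index 2 in `R`, whence `2 ∈ m`, and `(1 + x)² = 1` gives `x² = -2x` for `x ∈ m`. By
Nakayama the chain `R ⊋ m ⊋ m² ⊋ ⋯ ⊋ m^{n-1} ⊋ 0` is strict, so each step at least halves the
cardinality and counting forces `|m/m²| = 2`; hence `m = (t)` for any `t ∈ m \ m²`. Writing
`2 = a t`, if `a ∈ m` then `(1 + a) t² = t² + 2t = 0` would give `m² = 0`; so `a` is a unit and
`m = (2)`. Finally `2^{n-1} ≠ 0 = 2^n` in `R`, so `R` has characteristic and cardinality `2^n`.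
-/

open IsLocalRing

namespace Submodule

variable {R M : Type*} [Ring R] [AddCommGroup M] [Module R M] [Finite M]

theorem eq_of_le_of_card_ge {N P : Submodule R M} (hle : N ≤ P)
    (hcard : Nat.card P ≤ Nat.card N) : N = P :=
  toAddSubgroup_injective (AddSubgroup.eq_of_le_of_card_ge hle hcard)

theorem two_mul_card_le_card_of_lt {N P : Submodule R M} (h : N < P) :
    2 * Nat.card N ≤ Nat.card P := by
  obtain ⟨k, hk⟩ :=
    AddSubgroup.card_dvd_of_le (H := N.toAddSubgroup) (K := P.toAddSubgroup) h.le
  have hk0 : k ≠ 0 := by rintro rfl; exact Nat.card_pos.ne' (hk.trans (mul_zero _))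
  have hk1 : k ≠ 1 := by
    rintro rfl
    exact h.ne (eq_of_le_of_card_ge h.le (hk.trans (mul_one _)).le)
  calc 2 * Nat.card N ≤ Nat.card N * k := by rw [mul_comm]; gcongr; omega
    _ = Nat.card P := hk.symm

end Submodule

theorem mul_self_eq_one_of_mulEquiv {M ι : Type*} [Monoid M]
    (e : M ≃* Multiplicative (ι → ZMod 2)) (u : M) : u * u = 1 :=
  e.injective <| by
    have h : (e u).toAdd + (e u).toAdd = 0 := funext fun _ => CharTwo.add_self_eq_zero _
    rw [map_mul, map_one, ← ofAdd_toAdd (e u), ← ofAdd_add, h, ofAdd_zero]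

theorem Ideal.two_mem_of_card_eq_two_mul {R : Type*} [Ring R] [Finite R] {I : Ideal R}
    (h : Nat.card R = 2 * Nat.card I) : (2 : R) ∈ I := by
  have hindex : I.toAddSubgroup.index = 2 := by
    have := I.toAddSubgroup.card_mul_index
    rw [h, mul_comm] at this
    exact Nat.eq_of_mul_eq_mul_right Nat.card_pos this
  simpa using AddSubgroup.two_smul_mem_of_index_two hindex (1 : R)

namespace IsLocalRing

variable {R : Type*} [CommRing R] [IsLocalRing R]

theorem isUnit_one_add_of_mem_maximalIdeal {x : R} (hx : x ∈ maximalIdeal R) :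
    IsUnit (1 + x) := by
  simpa using isUnit_one_sub_self_of_mem_nonunits (-x) ((mem_maximalIdeal _).mp (neg_mem hx))

theorem mul_self_eq_neg_two_mul_of_mem_maximalIdeal (hU : ∀ u : Rˣ, u * u = 1) {x : R}
    (hx : x ∈ maximalIdeal R) : x * x = -(2 * x) := by
  have hunit := isUnit_one_add_of_mem_maximalIdeal hx
  have := congrArg Units.val (hU hunit.unit)
  simp only [Units.val_mul, IsUnit.unit_spec, Units.val_one] at this
  linear_combination this

theorem maximalIdeal_pow_succ_lt [IsNoetherianRing R] {i : ℕ}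
    (h : maximalIdeal R ^ (i + 1) ≠ ⊥) : maximalIdeal R ^ (i + 1) < maximalIdeal R ^ i := by
  refine lt_of_le_of_ne (Ideal.pow_le_pow_right i.le_succ) fun heq => h ?_
  have hi : maximalIdeal R ^ i = ⊥ :=
    Submodule.eq_bot_of_le_smul_of_le_jacobson_bot _ _ (IsNoetherian.noetherian _)
      (by rw [Ideal.smul_eq_mul, ← pow_succ', heq]) (maximalIdeal_le_jacobson ⊥)
  rw [heq, hi]

theorem maximalIdeal_eq_span_two_of_eq_span {t : R} (ht : maximalIdeal R = Ideal.span {t})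
    (htt : t * t = -(2 * t)) (h2 : (2 : R) ∈ maximalIdeal R) (hsq : maximalIdeal R ^ 2 ≠ ⊥) :
    maximalIdeal R = Ideal.span {2} := by
  obtain ⟨a, ha⟩ := Ideal.mem_span_singleton'.mp (ht ▸ h2)
  rw [ht, ← ha, Ideal.span_singleton_mul_left_unit]
  by_contra hna
  have hunit := isUnit_one_add_of_mem_maximalIdeal ((mem_maximalIdeal a).mpr hna)
  have htt0 : t * t = 0 := hunit.mul_right_eq_zero.mp (by linear_combination htt + t * ha)
  exact hsq (by rw [ht, Ideal.span_singleton_pow, sq, htt0, Ideal.span_singleton_eq_bot])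

variable [Finite R]

theorem card_maximalIdeal_add_card_units :
    Nat.card (maximalIdeal R) + Nat.card Rˣ = Nat.card R := by
  have hrange : Set.range ((↑) : Rˣ → R) = (maximalIdeal R : Set R)ᶜ := by
    ext x; simp [mem_maximalIdeal, mem_nonunits_iff, IsUnit]
  rw [Nat.card_congr (Equiv.ofInjective _ Units.val_injective), hrange]
  exact Set.ncard_add_ncard_compl _

theorem two_pow_succ_le_card_maximalIdeal_pow (i j : ℕ) (h : maximalIdeal R ^ (i + j) ≠ ⊥) :
    2 ^ (j + 1) ≤ Nat.card ↥(maximalIdeal R ^ i) := by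
  induction j generalizing i with
  | zero =>
    exact Finite.one_lt_card_iff_nontrivial.mpr (Submodule.nontrivial_iff_ne_bot.mpr h)
  | succ j ih =>
    have hsucc : maximalIdeal R ^ (i + 1) ≠ ⊥ := fun h1 =>
      h (eq_bot_iff.mpr (h1 ▸ Ideal.pow_le_pow_right (by omega)))
    calc 2 ^ (j + 1 + 1) = 2 * 2 ^ (j + 1) := pow_succ' _ _
      _ ≤ 2 * Nat.card ↥(maximalIdeal R ^ (i + 1)) := by
        gcongr; exact ih (i + 1) (by rwa [add_right_comm])
      _ ≤ Nat.card ↥(maximalIdeal R ^ i) :=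
        Submodule.two_mul_card_le_card_of_lt (maximalIdeal_pow_succ_lt hsucc)

theorem maximalIdeal_eq_span_of_notMem_sq
    (hcard : Nat.card (maximalIdeal R) ≤ 2 * Nat.card ↥(maximalIdeal R ^ 2)) {t : R}
    (ht : t ∈ maximalIdeal R) (ht2 : t ∉ maximalIdeal R ^ 2) :
    maximalIdeal R = Ideal.span {t} := by
  have hlt : maximalIdeal R ^ 2 < Ideal.span {t} ⊔ maximalIdeal R ^ 2 :=
    lt_of_le_of_ne le_sup_right fun h =>
      ht2 (h ▸ Ideal.mem_sup_left (Ideal.mem_span_singleton_self t))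
  have hsup : Ideal.span {t} ⊔ maximalIdeal R ^ 2 = maximalIdeal R :=
    Submodule.eq_of_le_of_card_ge
      (sup_le ((Ideal.span_singleton_le_iff_mem _).mpr ht) (Ideal.pow_le_self two_ne_zero))
      (hcard.trans (Submodule.two_mul_card_le_card_of_lt hlt))
  refine le_antisymm ?_ (hsup ▸ le_sup_left)
  refine Submodule.le_of_le_smul_of_le_jacobson_bot (IsNoetherian.noetherian _)
    (maximalIdeal_le_jacobson ⊥) ?_
  rw [Ideal.smul_eq_mul, ← sq, hsup]

theorem nonempty_ringEquiv_zmod_of_maximalIdeal_eq_span {p n : ℕ} [Fact p.Prime]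
    (hcard : Nat.card R = p ^ n) (hp : maximalIdeal R = Ideal.span {(p : R)})
    (hpow : maximalIdeal R ^ (n - 1) ≠ ⊥) : Nonempty (R ≃+* ZMod (p ^ n)) := by
  have : Fintype R := Fintype.ofFinite R
  have hfcard : Fintype.card R = p ^ n := by rw [← Nat.card_eq_fintype_card, hcard]
  have hp_pow : (p : R) ^ (n - 1) ≠ 0 := by
    rwa [hp, Ideal.span_singleton_pow, Ne, Ideal.span_singleton_eq_bot] at hpow
  have : CharP R (p ^ n) := charP_of_prime_pow_injective R p n hfcard fun i hi hi0 => by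
    by_contra hne
    exact hp_pow <| by
      rw [← Nat.sub_add_cancel (show i ≤ n - 1 by omega), pow_add, hi0, mul_zero]
  exact ⟨(ZMod.ringEquiv R hfcard).symm⟩

end IsLocalRing

theorem eq_zmod_of_unit_group {R : Type*} [CommRing R] [IsLocalRing R] [Finite R]
    (n : ℕ) (hn : 3 ≤ n) (hcard : Nat.card R = 2 ^ n)
    (hm : (IsLocalRing.maximalIdeal R) ^ (n - 1) ≠ ⊥)
    (hU : Nonempty (Rˣ ≃* Multiplicative (Fin (n - 1) → ZMod 2))) :
    IsLocalRing.maximalIdeal R = Ideal.span {(2 : R)} ∧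
      Nonempty (R ≃+* ZMod (2 ^ n)) := by
  obtain ⟨e⟩ := hU
  have hpow : 2 ^ n = 2 * 2 ^ (n - 1) := by rw [← pow_succ']; congr 1; omega
  have hcard_m : Nat.card (maximalIdeal R) = 2 ^ (n - 1) := by
    have hunits : Nat.card Rˣ = 2 ^ (n - 1) := by simp [Nat.card_congr e.toEquiv]
    have := card_maximalIdeal_add_card_units (R := R)
    omega
  have hsq : maximalIdeal R ^ 2 ≠ ⊥ := fun h =>
    hm (eq_bot_iff.mpr (h ▸ Ideal.pow_le_pow_right (by omega)))
  have hcard_sq : Nat.card (maximalIdeal R) ≤ 2 * Nat.card ↥(maximalIdeal R ^ 2) := by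
    have := two_pow_succ_le_card_maximalIdeal_pow 2 (n - 3)
      (by rwa [show 2 + (n - 3) = n - 1 by omega])
    rw [show n - 3 + 1 = n - 2 by omega] at this
    rw [hcard_m, show n - 1 = n - 2 + 1 by omega, pow_succ']
    omega
  obtain ⟨t, ht, ht2⟩ :=
    SetLike.exists_of_lt (pow_one (maximalIdeal R) ▸ maximalIdeal_pow_succ_lt hsq)
  have hm_two : maximalIdeal R = Ideal.span {2} :=
    maximalIdeal_eq_span_two_of_eq_span (maximalIdeal_eq_span_of_notMem_sq hcard_sq ht ht2)
      (mul_self_eq_neg_two_mul_of_mem_maximalIdeal (mul_self_eq_one_of_mulEquiv e) ht)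
      (Ideal.two_mem_of_card_eq_two_mul (by rw [hcard, hcard_m, hpow])) hsq
  exact ⟨hm_two,
    nonempty_ringEquiv_zmod_of_maximalIdeal_eq_span hcard (by exact_mod_cast hm_two) hm⟩
end
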